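/- Let I, J be a partition of {1,…,n} and φ a smooth function of the variables (p_i)_{i∈I}, (x^j)_{j∈J}. Define the Legendre embedding F of ℝ^{|I|+|J|} into P by x^0 = φ − Σ_{i∈I} p_i ∂φ/∂p_i, p_j = −∂φ/∂x^j for j ∈ J, x^i = ∂φ/∂p_i for i ∈ I, with p_i (i ∈ I) and x^j (j ∈ J) as parameters. Then: (a) the pullback of the contact form vanishes, θ(F(q))(DF(q) v) = 0 for all q and v (F parametrizes a Legendre submanifold Σ_φ); (b) the pullback metric g(q)(u,v) = ⟨DF(q)u, G(F(q)) DF(q)v⟩ has components g(∂_{p_i}, ∂_{p_{i'}}) = 2 ∂²φ/∂p_i∂p_{i'} for i,i' ∈ I, g(∂_{x^j}, ∂_{x^{j'}}) = −2 ∂²φ/∂x^j∂x^{j'} for j,j' ∈ J, and g(∂_{p_i}, ∂_{x^j}) = 0 for i ∈ I, j ∈ J. -/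

import Mathlib

/-!
Statement 2: For a partition `I, J` of `{1,…,n}` and a smooth function
`φ(p_i (i∈I), x^j (j∈J))`, the Legendre embedding `F` given by
`x^0 = φ - Σ_{i∈I} p_i ∂φ/∂p_i`, `p_j = -∂φ/∂x^j (j∈J)`, `x^i = ∂φ/∂p_i (i∈I)`
satisfies: (a) the pullback of the contact form `θ` vanishes;
(b) the pullback of the Mrugala metric `G` has components
`2 φ_{ii'}` on the `I`-block, `-2 φ_{jj'}` on the `J`-block, and `0` on mixed pairs.
-/

abbrev Idx (n : ℕ) : Type := Unit ⊕ (Fin n ⊕ Fin n)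
abbrev Pt (n : ℕ) : Type := Idx n → ℝ

/-- The Mrugala metric `G = [[1, 0, pᵀ], [0, 0ₙ, Iₙ], [p, Iₙ, p pᵀ]]`. -/
def Gmat (n : ℕ) (m : Pt n) : Matrix (Idx n) (Idx n) ℝ :=
  Matrix.of fun a b =>
    match a, b with
    | Sum.inl _, Sum.inl _ => 1
    | Sum.inl _, Sum.inr (Sum.inl _) => 0
    | Sum.inl _, Sum.inr (Sum.inr j) => m (Sum.inr (Sum.inl j))
    | Sum.inr (Sum.inl _), Sum.inl _ => 0
    | Sum.inr (Sum.inl _), Sum.inr (Sum.inl _) => 0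
    | Sum.inr (Sum.inl i), Sum.inr (Sum.inr j) => if i = j then 1 else 0
    | Sum.inr (Sum.inr i), Sum.inl _ => m (Sum.inr (Sum.inl i))
    | Sum.inr (Sum.inr i), Sum.inr (Sum.inl j) => if i = j then 1 else 0
    | Sum.inr (Sum.inr i), Sum.inr (Sum.inr j) =>
        m (Sum.inr (Sum.inl i)) * m (Sum.inr (Sum.inl j))

/-- First partial derivative of a function of the parameters `q : Fin n → ℝ`. -/
noncomputable def pd1 {n : ℕ} (φ : (Fin n → ℝ) → ℝ) (q : Fin n → ℝ) (i : Fin n) : ℝ :=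
  fderiv ℝ φ q (Pi.single i 1)

/-- Second partial derivative `φ_{ij}`. -/
noncomputable def pd2 {n : ℕ} (φ : (Fin n → ℝ) → ℝ) (q : Fin n → ℝ) (i j : Fin n) : ℝ :=
  fderiv ℝ (fun q' => pd1 φ q' j) q (Pi.single i 1)

/-- The Legendre embedding `F : ℝ^n → P` determined by `φ` and the partition
`I, Iᶜ`: the parameters `q i` are `p_i` for `i ∈ I` and `x^i` for `i ∉ I`. -/
noncomputable def LegF {n : ℕ} (I : Finset (Fin n)) (φ : (Fin n → ℝ) → ℝ)
    (q : Fin n → ℝ) : Pt n := fun a =>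
  match a with
  | Sum.inl _ => φ q - ∑ i ∈ I, q i * pd1 φ q i
  | Sum.inr (Sum.inl k) => if k ∈ I then q k else -pd1 φ q k
  | Sum.inr (Sum.inr k) => if k ∈ I then pd1 φ q k else q k

/-- The contact covector: `θ(m)(v) = v^{x^0} + Σ_l p_l v^{x^l}`. -/
noncomputable def thetaAp {n : ℕ} (m : Pt n) (v : Pt n) : ℝ :=
  v (Sum.inl ()) + ∑ l, m (Sum.inr (Sum.inl l)) * v (Sum.inr (Sum.inr l))

/-- Pullback metric `g(q)(u,v) = ⟨DF(q)u, G(F(q)) DF(q)v⟩`. -/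
noncomputable def pullG {n : ℕ} (I : Finset (Fin n)) (φ : (Fin n → ℝ) → ℝ)
    (q : Fin n → ℝ) (u v : Fin n → ℝ) : ℝ :=
  ∑ a, ∑ b, fderiv ℝ (LegF I φ) q u a * Gmat n (LegF I φ q) a b *
    fderiv ℝ (LegF I φ) q v b

/- ---------- auxiliary ---------- -/

noncomputable def D2 {n : ℕ} (φ : (Fin n → ℝ) → ℝ) (q v : Fin n → ℝ) (k : Fin n) : ℝ :=
  fderiv ℝ (fun q' => pd1 φ q' k) q v

lemma D2_single {n : ℕ} (φ : (Fin n → ℝ) → ℝ) (q : Fin n → ℝ) (i k : Fin n) :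
    D2 φ q (Pi.single i 1) k = pd2 φ q i k := rfl

lemma clm_expand {n : ℕ} (L : (Fin n → ℝ) →L[ℝ] ℝ) (v : Fin n → ℝ) :
    L v = ∑ l, v l * L (Pi.single l 1) := by
  have hv : v = ∑ l, v l • (Pi.single l 1 : Fin n → ℝ) := by
    funext j
    simp [Finset.sum_apply, Pi.single_apply]
  conv_lhs => rw [hv]
  rw [map_sum]
  simp [smul_eq_mul]

section
variable {n : ℕ} {φ : (Fin n → ℝ) → ℝ} (hφ : ContDiff ℝ (⊤ : ℕ∞) φ)
include hφ

lemma pd1_contDiff (k : Fin n) : ContDiff ℝ (⊤ : ℕ∞) fun q => pd1 φ q k :=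
  (hφ.fderiv_right (by simp)).clm_apply contDiff_const

lemma pd1_diff (k : Fin n) : Differentiable ℝ fun q => pd1 φ q k :=
  (pd1_contDiff hφ k).differentiable (by simp)

lemma pd2_symm (q : Fin n → ℝ) (i j : Fin n) : pd2 φ q i j = pd2 φ q j i := by
  have hsymm : IsSymmSndFDerivAt ℝ φ q := hφ.contDiffAt.isSymmSndFDerivAt (by rw [minSmoothness_of_isRCLikeNormedField]; exact WithTop.coe_le_coe.mpr le_top)
  have key : ∀ a b : Fin n → ℝ,
      fderiv ℝ (fun q' => fderiv ℝ φ q' b) q a = fderiv ℝ (fderiv ℝ φ) q a b := by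
    intro a b
    have h := fderiv_clm_apply (x := q) (c := fderiv ℝ φ) (u := fun _ => b)
      ((hφ.fderiv_right (m := (⊤ : ℕ∞)) (by simp)).differentiable (by simp) q) (differentiableAt_const b)
    simp at h
    rw [h, ContinuousLinearMap.flip_apply]
  unfold pd2 pd1
  rw [key, key, hsymm.eq]
end

lemma dproj {n : ℕ} (i : Fin n) (q v : Fin n → ℝ) :
    fderiv ℝ (fun q : Fin n → ℝ => q i) q v = v i := by
  rw [show (fun q : Fin n → ℝ => q i) = ⇑(ContinuousLinearMap.proj (R := ℝ) i) from rfl,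
    ContinuousLinearMap.fderiv]
  rfl

section
variable {n : ℕ} {φ : (Fin n → ℝ) → ℝ} (hφ : ContDiff ℝ (⊤ : ℕ∞) φ)
include hφ

lemma hproj : ∀ i : Fin n, Differentiable ℝ (fun q : Fin n → ℝ => q i) := fun i =>
  (ContinuousLinearMap.proj (R := ℝ) i : (Fin n → ℝ) →L[ℝ] ℝ).differentiable

lemma LegF_fderiv_apply (I : Finset (Fin n)) (q v : Fin n → ℝ) :
    fderiv ℝ (LegF I φ) q v = fun a => match a with
      | Sum.inl _ => fderiv ℝ φ q v - ∑ i ∈ I, (v i * pd1 φ q i + q i * D2 φ q v i)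
      | Sum.inr (Sum.inl k) => if k ∈ I then v k else -D2 φ q v k
      | Sum.inr (Sum.inr k) => if k ∈ I then D2 φ q v k else v k := by
  have hdφ := hφ.differentiable (by simp)
  have hd1 := pd1_diff hφ
  have hp := hproj hφ (n := n)
  have hmul : ∀ i : Fin n, DifferentiableAt ℝ (fun q : Fin n → ℝ => q i * pd1 φ q i) q :=
    fun i => (hp i q).mul (hd1 i q)
  have hsum : DifferentiableAt ℝ (fun q : Fin n → ℝ => ∑ i ∈ I, q i * pd1 φ q i) q :=
    DifferentiableAt.fun_sum fun i _ => hmul i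
  have hall : ∀ a : Idx n, DifferentiableAt ℝ (fun q => LegF I φ q a) q := by
    rintro (⟨⟩ | k | k)
    · exact (hdφ q).sub hsum
    · show DifferentiableAt ℝ (fun q : Fin n → ℝ => if k ∈ I then q k else -pd1 φ q k) q
      by_cases hk : k ∈ I <;> simp only [hk, if_true, if_false]
      · exact hp k q
      · exact (hd1 k q).neg
    · show DifferentiableAt ℝ (fun q : Fin n → ℝ => if k ∈ I then pd1 φ q k else q k) q
      by_cases hk : k ∈ I <;> simp only [hk, if_true, if_false]
      · exact hd1 k q
      · exact hp k q
  have h := fderiv_pi (𝕜 := ℝ) (φ := fun a q => LegF I φ q a) hall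
  funext a
  have ha : fderiv ℝ (LegF I φ) q v a = fderiv ℝ (fun q => LegF I φ q a) q v := by
    rw [show (LegF I φ) = (fun q a => LegF I φ q a) from rfl, h]
    rfl
  rw [ha]
  rcases a with ⟨⟩ | k | k
  · show fderiv ℝ (fun q => φ q - ∑ i ∈ I, q i * pd1 φ q i) q v = _
    rw [fderiv_fun_sub (hdφ q) hsum, fderiv_fun_sum fun i _ => hmul i]
    simp only [ContinuousLinearMap.sub_apply, ContinuousLinearMap.sum_apply]
    congr 1
    refine Finset.sum_congr rfl fun i _ => ?_
    rw [fderiv_fun_mul (hp i q) (hd1 i q)]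
    simp only [ContinuousLinearMap.add_apply, ContinuousLinearMap.smul_apply, smul_eq_mul,
      dproj]
    unfold D2
    ring
  · show fderiv ℝ (fun q : Fin n → ℝ => if k ∈ I then q k else -pd1 φ q k) q v = _
    by_cases hk : k ∈ I <;> simp only [hk, if_true, if_false]
    · exact dproj k q v
    · rw [fderiv_fun_neg]; rfl
  · show fderiv ℝ (fun q : Fin n → ℝ => if k ∈ I then pd1 φ q k else q k) q v = _
    by_cases hk : k ∈ I <;> simp only [hk, if_true, if_false]
    · rfl
    · exact dproj k q v
end

lemma sum_over {n : ℕ} (I : Finset (Fin n)) (f : Fin n → ℝ) :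
    ∑ i ∈ I, f i = ∑ i, if i ∈ I then f i else 0 := by
  rw [Finset.sum_ite_mem, Finset.univ_inter]

section
variable {n : ℕ} {φ : (Fin n → ℝ) → ℝ} (hφ : ContDiff ℝ (⊤ : ℕ∞) φ)
include hφ

lemma theta_vanish (I : Finset (Fin n)) (q v : Fin n → ℝ) :
    thetaAp (LegF I φ q) (fderiv ℝ (LegF I φ) q v) = 0 := by
  rw [LegF_fderiv_apply hφ I q v]
  show (fderiv ℝ φ q v - ∑ i ∈ I, (v i * pd1 φ q i + q i * D2 φ q v i))
      + ∑ l, (if l ∈ I then q l else -pd1 φ q l) * (if l ∈ I then D2 φ q v l else v l) = 0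
  rw [clm_expand (fderiv ℝ φ q) v, sum_over I]
  rw [sub_add_eq_add_sub, ← Finset.sum_add_distrib, ← Finset.sum_sub_distrib]
  apply Finset.sum_eq_zero
  intro l _
  by_cases hl : l ∈ I <;> simp only [hl, if_true, if_false, pd1] <;> ring
end

lemma Gquad {n : ℕ} (m U V : Pt n) :
    (∑ a, ∑ b, U a * Gmat n m a b * V b)
      = thetaAp m U * thetaAp m V
        + ∑ k, (U (Sum.inr (Sum.inl k)) * V (Sum.inr (Sum.inr k))
            + U (Sum.inr (Sum.inr k)) * V (Sum.inr (Sum.inl k))) := by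
  simp only [Fintype.sum_sum_type, Finset.univ_unique, Finset.sum_singleton, thetaAp,
    Gmat, Matrix.of_apply]
  simp only [mul_ite, ite_mul, mul_one, one_mul, mul_zero, zero_mul,
    Finset.sum_ite_eq', Finset.sum_ite_eq, Finset.mem_univ, if_true]
  simp only [add_mul, mul_add, Finset.mul_sum, Finset.sum_mul, Finset.sum_add_distrib,
    Finset.sum_mul_sum]
  simp only [Finset.sum_const_zero, zero_add, add_zero]
  have hswap : ∀ f : Fin n → Fin n → ℝ, ∑ x, ∑ y, f x y = ∑ y, ∑ x, f x y :=
    fun f => Finset.sum_comm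
  conv_rhs => rw [hswap]
  simp only [mul_comm, mul_left_comm, mul_assoc]
  ring_nf

section
variable {n : ℕ} {φ : (Fin n → ℝ) → ℝ} (hφ : ContDiff ℝ (⊤ : ℕ∞) φ)
include hφ

lemma pullG_eq (I : Finset (Fin n)) (q u v : Fin n → ℝ) :
    pullG I φ q u v = ∑ k,
      (fderiv ℝ (LegF I φ) q u (Sum.inr (Sum.inl k)) * fderiv ℝ (LegF I φ) q v (Sum.inr (Sum.inr k))
      + fderiv ℝ (LegF I φ) q u (Sum.inr (Sum.inr k)) * fderiv ℝ (LegF I φ) q v (Sum.inr (Sum.inl k))) := by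
  unfold pullG
  rw [Gquad, theta_vanish hφ, theta_vanish hφ]
  ring

lemma caseII (I : Finset (Fin n)) (q : Fin n → ℝ) (i i' : Fin n) (hi : i ∈ I) (hi' : i' ∈ I) :
    pullG I φ q (Pi.single i 1) (Pi.single i' 1) = 2 * pd2 φ q i i' := by
  rw [pullG_eq hφ I q _ _]
  simp only [LegF_fderiv_apply hφ I q]
  trans (∑ k, ((if k = i then pd2 φ q i' i else 0) + (if k = i' then pd2 φ q i i' else 0)))
  · refine Finset.sum_congr rfl fun k _ => ?_
    by_cases h1 : k ∈ I <;> by_cases h2 : k = i <;> by_cases h3 : k = i' <;>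
      simp_all [Pi.single_apply, D2_single]
  · rw [Finset.sum_add_distrib, Finset.sum_ite_eq', Finset.sum_ite_eq']
    simp [pd2_symm hφ q i' i]
    ring

lemma caseJJ (I : Finset (Fin n)) (q : Fin n → ℝ) (j j' : Fin n) (hj : j ∉ I) (hj' : j' ∉ I) :
    pullG I φ q (Pi.single j 1) (Pi.single j' 1) = -2 * pd2 φ q j j' := by
  rw [pullG_eq hφ I q _ _]
  simp only [LegF_fderiv_apply hφ I q]
  trans (∑ k, ((if k = j' then -pd2 φ q j j' else 0) + (if k = j then -pd2 φ q j' j else 0)))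
  · refine Finset.sum_congr rfl fun k _ => ?_
    by_cases h1 : k ∈ I <;> by_cases h2 : k = j <;> by_cases h3 : k = j' <;>
      simp_all [Pi.single_apply, D2_single]
  · rw [Finset.sum_add_distrib, Finset.sum_ite_eq', Finset.sum_ite_eq']
    simp [pd2_symm hφ q j' j]
    ring

lemma caseIJ (I : Finset (Fin n)) (q : Fin n → ℝ) (i j : Fin n) (hi : i ∈ I) (hj : j ∉ I) :
    pullG I φ q (Pi.single i 1) (Pi.single j 1) = 0 := by
  rw [pullG_eq hφ I q _ _]
  simp only [LegF_fderiv_apply hφ I q]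
  trans (∑ k, ((if k = i then pd2 φ q j i else 0) + (if k = j then -pd2 φ q i j else 0)))
  · refine Finset.sum_congr rfl fun k _ => ?_
    by_cases h1 : k ∈ I <;> by_cases h2 : k = i <;> by_cases h3 : k = j <;>
      simp_all [Pi.single_apply, D2_single]
  · rw [Finset.sum_add_distrib, Finset.sum_ite_eq', Finset.sum_ite_eq']
    simp [pd2_symm hφ q j i]

end

theorem legendre_submanifold_and_pullback_metric (n : ℕ) (hn : 1 ≤ n)
    (I : Finset (Fin n)) (φ : (Fin n → ℝ) → ℝ) (hφ : ContDiff ℝ (⊤ : ℕ∞) φ) :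
    (∀ (q : Fin n → ℝ) (v : Fin n → ℝ),
        thetaAp (LegF I φ q) (fderiv ℝ (LegF I φ) q v) = 0) ∧
    (∀ (q : Fin n → ℝ) (i i' : Fin n), i ∈ I → i' ∈ I →
        pullG I φ q (Pi.single i 1) (Pi.single i' 1) = 2 * pd2 φ q i i') ∧
    (∀ (q : Fin n → ℝ) (j j' : Fin n), j ∉ I → j' ∉ I →
        pullG I φ q (Pi.single j 1) (Pi.single j' 1) = -2 * pd2 φ q j j') ∧
    (∀ (q : Fin n → ℝ) (i j : Fin n), i ∈ I → j ∉ I →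
        pullG I φ q (Pi.single i 1) (Pi.single j 1) = 0) := by
  exact ⟨fun q v => theta_vanish hφ I q v,
    fun q i i' hi hi' => caseII hφ I q i i' hi hi',
    fun q j j' hj hj' => caseJJ hφ I q j j' hj hj',
    fun q i j hi hj => caseIJ hφ I q i j hi hj⟩
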